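/- arXiv:2601.00193 — 2 statements merged into one kernel-verified Lean document; each statement's English description precedes it below -/
import Mathlib

section
/- Let μ > 0, λ > 0, τ > 0, and let a, b be arbitrary periodic grid functions. If periodic grid functions u and w satisfy, for all p ∈ ℤ, (1/τ)·u_p − (μ/τ)·w_p + (1/2)·Ψ(a, u)_p − (h²/4)·Ψ(b, u)_p + (1/2)·(Δ_x u)_p − (h²/12)·(Δ_x w)_p − (λ/2)·w_p = 0 and w_p = (δ_xx u)_p − (h²/12)(δ_xx w)_p, then u_p = 0 and w_p = 0 for all p ∈ ℤ. Consequently, each time step of the linearized compact difference scheme has a unique solution. -/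
open Finset

/-- A periodic grid function with period `M`. -/
def Periodic (M : ℕ) (w : ℤ → ℝ) : Prop := ∀ p : ℤ, w (p + (M : ℤ)) = w p

/-- Discrete inner product `⟨v,w⟩ = h ∑_{p=1}^M v_p w_p`. -/
noncomputable def ip (M : ℕ) (h : ℝ) (v w : ℤ → ℝ) : ℝ :=
  h * ∑ p ∈ Finset.Icc (1 : ℤ) (M : ℤ), v p * w p

/-- Discrete L² norm `‖w‖ = √⟨w,w⟩`. -/
noncomputable def nrm (M : ℕ) (h : ℝ) (w : ℤ → ℝ) : ℝ := Real.sqrt (ip M h w w)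

/-- Discrete H¹ seminorm `|w|₁`. -/
noncomputable def snorm1 (M : ℕ) (h : ℝ) (w : ℤ → ℝ) : ℝ :=
  Real.sqrt (h * ∑ p ∈ Finset.Icc (1 : ℤ) (M : ℤ), ((w p - w (p - 1)) / h) ^ 2)

/-- Centered difference operator `(Δ_x w)_p = (w_{p+1} − w_{p−1})/(2h)`. -/
noncomputable def Dx (h : ℝ) (w : ℤ → ℝ) : ℤ → ℝ :=
  fun p => (w (p + 1) - w (p - 1)) / (2 * h)

/-- Second difference operator `(δ_xx w)_p = (w_{p+1} − 2w_p + w_{p−1})/h²`. -/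
noncomputable def Dxx (h : ℝ) (w : ℤ → ℝ) : ℤ → ℝ :=
  fun p => (w (p + 1) - 2 * w p + w (p - 1)) / h ^ 2

/-- Discrete nonlinear operator `Ψ(v,w)_p = (1/3)(v_p (Δ_x w)_p + (Δ_x (vw))_p)`. -/
noncomputable def Psi (h : ℝ) (v w : ℤ → ℝ) : ℤ → ℝ :=
  fun p => (1 / 3) * (v p * Dx h w p + Dx h (fun q => v q * w q) p)

section Aux

variable {M : ℕ} {h : ℝ}

lemma per_mul {f g : ℤ → ℝ} (hf : Periodic M f) (hg : Periodic M g) :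
    Periodic M (fun p => f p * g p) := fun p => by simp only [hf p, hg p]

lemma per_Dx {f : ℤ → ℝ} (hf : Periodic M f) : Periodic M (Dx h f) := by
  intro p
  unfold Dx
  rw [show p + (M : ℤ) + 1 = (p + 1) + (M : ℤ) by ring,
    show p + (M : ℤ) - 1 = (p - 1) + (M : ℤ) by ring, hf, hf]

lemma per_Dxx {f : ℤ → ℝ} (hf : Periodic M f) : Periodic M (Dxx h f) := by
  intro p
  unfold Dxx
  rw [show p + (M : ℤ) + 1 = (p + 1) + (M : ℤ) by ring,
    show p + (M : ℤ) - 1 = (p - 1) + (M : ℤ) by ring, hf, hf, hf]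

lemma sum_shift (hM : 1 ≤ M) {f : ℤ → ℝ} (hf : Periodic M f) :
    ∑ p ∈ Icc (1 : ℤ) (M : ℤ), f (p + 1) = ∑ p ∈ Icc (1 : ℤ) (M : ℤ), f p := by
  have hM' : (1 : ℤ) ≤ (M : ℤ) := by exact_mod_cast hM
  apply Finset.sum_nbij' (i := fun p => if p = (M : ℤ) then 1 else p + 1)
    (j := fun q => if q = 1 then (M : ℤ) else q - 1)
  · intro p hp
    simp only [mem_Icc] at hp ⊢
    split <;> omega
  · intro q hq
    simp only [mem_Icc] at hq ⊢
    split <;> omega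
  · intro p hp
    simp only [mem_Icc] at hp
    split
    · split <;> omega
    · split <;> omega
  · intro q hq
    simp only [mem_Icc] at hq
    split
    · split <;> omega
    · split <;> omega
  · intro p hp
    simp only [mem_Icc] at hp
    split
    · subst p
      rw [show (M : ℤ) + 1 = 1 + (M : ℤ) by ring, hf 1]
    · rfl

lemma sum_shift' (hM : 1 ≤ M) {f : ℤ → ℝ} (hf : Periodic M f) :
    ∑ p ∈ Icc (1 : ℤ) (M : ℤ), f (p - 1) = ∑ p ∈ Icc (1 : ℤ) (M : ℤ), f p := by
  have hper : Periodic M (fun p => f (p - 1)) := by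
    intro p
    simp only []
    rw [show p + (M : ℤ) - 1 = (p - 1) + (M : ℤ) by ring, hf]
  have := sum_shift hM hper
  simp only [add_sub_cancel_right] at this
  exact this.symm

lemma tele (hM : 1 ≤ M) {C : ℤ → ℝ} (hC : Periodic M C) :
    ∑ p ∈ Icc (1 : ℤ) (M : ℤ), (C p - C (p - 1)) = 0 := by
  rw [Finset.sum_sub_distrib, sum_shift' hM hC, sub_self]


lemma skew (hM : 1 ≤ M) (hh : h ≠ 0) {f g : ℤ → ℝ}
    (hf : Periodic M f) (hg : Periodic M g) :
    ∑ p ∈ Icc (1 : ℤ) (M : ℤ), Dx h f p * g p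
      = - ∑ p ∈ Icc (1 : ℤ) (M : ℤ), f p * Dx h g p := by
  have hC : Periodic M (fun p => (f (p + 1) * g p + f p * g (p + 1)) / (2 * h)) := by
    intro p
    simp only []
    rw [show p + (M : ℤ) + 1 = (p + 1) + (M : ℤ) by ring, hf, hg, hf, hg]
  have key : ∑ p ∈ Icc (1 : ℤ) (M : ℤ), (Dx h f p * g p + f p * Dx h g p) = 0 := by
    rw [← tele hM hC]
    apply Finset.sum_congr rfl
    intro p _
    simp only [Dx, sub_add_cancel]
    field_simp
    ring
  rw [Finset.sum_add_distrib] at key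
  linarith

lemma sym (hM : 1 ≤ M) (hh : h ≠ 0) {f g : ℤ → ℝ}
    (hf : Periodic M f) (hg : Periodic M g) :
    ∑ p ∈ Icc (1 : ℤ) (M : ℤ), Dxx h f p * g p
      = ∑ p ∈ Icc (1 : ℤ) (M : ℤ), f p * Dxx h g p := by
  have hC : Periodic M (fun p => (f (p + 1) * g p - f p * g (p + 1)) / h ^ 2) := by
    intro p
    simp only []
    rw [show p + (M : ℤ) + 1 = (p + 1) + (M : ℤ) by ring, hf, hg, hf, hg]
  have key : ∑ p ∈ Icc (1 : ℤ) (M : ℤ), (Dxx h f p * g p - f p * Dxx h g p) = 0 := by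
    rw [← tele hM hC]
    apply Finset.sum_congr rfl
    intro p _
    simp only [Dxx, sub_add_cancel]
    field_simp
    ring
  rw [Finset.sum_sub_distrib] at key
  linarith

lemma dxx_self (hM : 1 ≤ M) (hh : h ≠ 0) {f : ℤ → ℝ} (hf : Periodic M f) :
    h ^ 2 * ∑ p ∈ Icc (1 : ℤ) (M : ℤ), Dxx h f p * f p
      = - ∑ p ∈ Icc (1 : ℤ) (M : ℤ), (f (p + 1) - f p) ^ 2 := by
  have hC : Periodic M (fun p => f (p + 1) ^ 2 - f (p + 1) * f p) := by
    intro p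
    simp only []
    rw [show p + (M : ℤ) + 1 = (p + 1) + (M : ℤ) by ring, hf, hf]
  have key : ∑ p ∈ Icc (1 : ℤ) (M : ℤ),
      (h ^ 2 * (Dxx h f p * f p) + (f (p + 1) - f p) ^ 2) = 0 := by
    rw [← tele hM hC]
    apply Finset.sum_congr rfl
    intro p _
    simp only [Dxx, sub_add_cancel]
    field_simp
    ring
  rw [Finset.sum_add_distrib, ← Finset.mul_sum] at key
  linarith

lemma dxx_dx (hM : 1 ≤ M) (hh : h ≠ 0) {f : ℤ → ℝ} (hf : Periodic M f) :
    ∑ p ∈ Icc (1 : ℤ) (M : ℤ), Dxx h f p * Dx h f p = 0 := by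
  have hC : Periodic M (fun p => (f (p + 1) - f p) ^ 2 / (2 * h ^ 3)) := by
    intro p
    simp only []
    rw [show p + (M : ℤ) + 1 = (p + 1) + (M : ℤ) by ring, hf, hf]
  rw [← tele hM hC]
  apply Finset.sum_congr rfl
  intro p _
  simp only [Dxx, Dx, sub_add_cancel]
  field_simp
  ring

lemma dxx_dx_mixed (hM : 1 ≤ M) (hh : h ≠ 0) {f g : ℤ → ℝ}
    (hf : Periodic M f) (hg : Periodic M g) :
    ∑ p ∈ Icc (1 : ℤ) (M : ℤ), Dxx h f p * Dx h g p
      = - ∑ p ∈ Icc (1 : ℤ) (M : ℤ), Dx h f p * Dxx h g p := by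
  have hC : Periodic M (fun p => (f (p + 1) - f p) * (g (p + 1) - g p) / h ^ 3) := by
    intro p
    simp only []
    rw [show p + (M : ℤ) + 1 = (p + 1) + (M : ℤ) by ring, hf, hg, hf, hg]
  have key : ∑ p ∈ Icc (1 : ℤ) (M : ℤ),
      (Dxx h f p * Dx h g p + Dx h f p * Dxx h g p) = 0 := by
    rw [← tele hM hC]
    apply Finset.sum_congr rfl
    intro p _
    simp only [Dxx, Dx, sub_add_cancel]
    field_simp
    ring
  rw [Finset.sum_add_distrib] at key
  linarith

lemma sq_diff_le (hM : 1 ≤ M) {f : ℤ → ℝ} (hf : Periodic M f) :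
    ∑ p ∈ Icc (1 : ℤ) (M : ℤ), (f (p + 1) - f p) ^ 2
      ≤ 4 * ∑ p ∈ Icc (1 : ℤ) (M : ℤ), f p ^ 2 := by
  have hstep : ∑ p ∈ Icc (1 : ℤ) (M : ℤ), (f (p + 1) - f p) ^ 2
      ≤ ∑ p ∈ Icc (1 : ℤ) (M : ℤ), (2 * f (p + 1) ^ 2 + 2 * f p ^ 2) := by
    apply Finset.sum_le_sum
    intro p _
    nlinarith [sq_nonneg (f (p + 1) + f p)]
  have hper : Periodic M (fun p => f p ^ 2) := by
    intro p; simp only [hf p]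
  have hsh := sum_shift hM hper
  rw [Finset.sum_add_distrib, ← Finset.mul_sum, ← Finset.mul_sum] at hstep
  linarith

lemma dx_self (hM : 1 ≤ M) (hh : h ≠ 0) {f : ℤ → ℝ} (hf : Periodic M f) :
    ∑ p ∈ Icc (1 : ℤ) (M : ℤ), Dx h f p * f p = 0 := by
  have := skew hM hh hf hf
  have h2 : ∑ p ∈ Icc (1 : ℤ) (M : ℤ), f p * Dx h f p
      = ∑ p ∈ Icc (1 : ℤ) (M : ℤ), Dx h f p * f p :=
    Finset.sum_congr rfl fun p _ => by ring
  linarith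

lemma psi_orth (hM : 1 ≤ M) (hh : h ≠ 0) {v f : ℤ → ℝ}
    (hv : Periodic M v) (hf : Periodic M f) :
    ∑ p ∈ Icc (1 : ℤ) (M : ℤ), Psi h v f p * f p = 0 := by
  have hvf : Periodic M (fun q => v q * f q) := per_mul hv hf
  have hskew := skew hM hh hvf hf
  have e1 : ∑ p ∈ Icc (1 : ℤ) (M : ℤ), Psi h v f p * f p
      = (1 / 3) * ∑ p ∈ Icc (1 : ℤ) (M : ℤ), (v p * Dx h f p * f p)
        + (1 / 3) * ∑ p ∈ Icc (1 : ℤ) (M : ℤ), (Dx h (fun q => v q * f q) p * f p) := by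
    rw [Finset.mul_sum, Finset.mul_sum, ← Finset.sum_add_distrib]
    apply Finset.sum_congr rfl
    intro p _
    simp only [Psi]
    ring
  have e2 : ∑ p ∈ Icc (1 : ℤ) (M : ℤ), (v p * f p) * Dx h f p
      = ∑ p ∈ Icc (1 : ℤ) (M : ℤ), v p * Dx h f p * f p :=
    Finset.sum_congr rfl fun p _ => by ring
  rw [e1, hskew]
  rw [e2]
  ring

lemma per_ext (hM : 1 ≤ M) {f : ℤ → ℝ} (hf : Periodic M f)
    (h0 : ∀ p ∈ Icc (1 : ℤ) (M : ℤ), f p = 0) : ∀ p : ℤ, f p = 0 := by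
  have hmul : ∀ (k : ℤ) (p : ℤ), f (p + k * (M : ℤ)) = f p := by
    intro k
    induction k using Int.induction_on with
    | zero => simp
    | succ n ih =>
      intro p
      rw [show p + ((n : ℤ) + 1) * (M : ℤ) = (p + (n : ℤ) * (M : ℤ)) + (M : ℤ) by ring,
        hf, ih]
    | pred n ih =>
      intro p
      have h1 := hf (p + (-(n : ℤ) - 1) * (M : ℤ))
      rw [show p + (-(n : ℤ) - 1) * (M : ℤ) + (M : ℤ) = p + (-(n : ℤ)) * (M : ℤ) by ring,
        ih] at h1
      exact h1.symm
  intro p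
  have hM' : (0 : ℤ) < (M : ℤ) := by exact_mod_cast hM
  have hMne : (M : ℤ) ≠ 0 := by omega
  set q : ℤ := (p - 1) % (M : ℤ) + 1 with hq
  have hq1 : 1 ≤ q := by
    have := Int.emod_nonneg (p - 1) hMne
    omega
  have hq2 : q ≤ (M : ℤ) := by
    have := Int.emod_lt_of_pos (p - 1) hM'
    omega
  have hpq : p = q + ((p - 1) / (M : ℤ)) * (M : ℤ) := by
    have h1 := Int.mul_ediv_add_emod (p - 1) (M : ℤ)
    have h2 : ((p - 1) / (M : ℤ)) * (M : ℤ) = (M : ℤ) * ((p - 1) / (M : ℤ)) := mul_comm _ _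
    omega
  have : f p = f q := by rw [hpq, hmul]
  rw [this]
  exact h0 q (Finset.mem_Icc.mpr ⟨hq1, hq2⟩)

end Aux

lemma alg_combine {h Swu A B Cq D Sw Du Dw : ℝ}
    (k1 : Swu = A - h ^ 2 / 12 * B) (k2 : h ^ 2 * A = -Du) (k3 : B = Cq)
    (k4 : Cq = Sw + h ^ 2 / 12 * D) (k5 : h ^ 2 * D = -Dw) :
    h ^ 2 * Swu = -Du - h ^ 4 / 12 * Sw + h ^ 4 / 144 * Dw := by
  linear_combination h ^ 2 * k1 + k2 - (h ^ 4 / 12) * k3 - (h ^ 4 / 12) * k4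
    - (h ^ 4 / 144) * k5

set_option maxHeartbeats 1000000 in
/-- the homogeneous linearized system has only the zero solution;
hence each time step of the linearized compact difference scheme is uniquely solvable. -/
theorem stmt_18 (M : ℕ) (hM : 3 ≤ M) (h : ℝ) (hh : 0 < h) (L : ℝ) (hL : L = M * h)
    (μ lam τ : ℝ) (hμ : 0 < μ) (hlam : 0 < lam) (hτ : 0 < τ)
    (a b : ℤ → ℝ) (ha : Periodic M a) (hb : Periodic M b)
    (u w : ℤ → ℝ) (hu : Periodic M u) (hw : Periodic M w)
    (hscheme : ∀ p : ℤ,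
      1 / τ * u p - μ / τ * w p
        + 1 / 2 * Psi h a u p - h ^ 2 / 4 * Psi h b u p
        + 1 / 2 * Dx h u p - h ^ 2 / 12 * Dx h w p - lam / 2 * w p = 0)
    (hrel : ∀ p : ℤ, w p = Dxx h u p - h ^ 2 / 12 * Dxx h w p) :
    ∀ p : ℤ, u p = 0 ∧ w p = 0 := by
  have hM1 : 1 ≤ M := by omega
  have hh' : h ≠ 0 := ne_of_gt hh
  have hDxxu_eq : ∀ p : ℤ, Dxx h u p = w p + h ^ 2 / 12 * Dxx h w p := fun p => by
    linarith [hrel p]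
  -- orthogonality facts
  have hPa := psi_orth (h := h) hM1 hh' ha hu
  have hPb := psi_orth (h := h) hM1 hh' hb hu
  have hDxuu := dx_self (h := h) hM1 hh' hu
  have hDxww := dx_self (h := h) hM1 hh' hw
  -- ∑ Dx w * u = 0
  have hDxw_u : ∑ p ∈ Icc (1 : ℤ) (M : ℤ), Dx h w p * u p = 0 := by
    have e1 := skew hM1 hh' hw hu
    have e2 : ∑ p ∈ Icc (1 : ℤ) (M : ℤ), w p * Dx h u p
        = ∑ p ∈ Icc (1 : ℤ) (M : ℤ),
            (Dxx h u p * Dx h u p - h ^ 2 / 12 * (Dxx h w p * Dx h u p)) :=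
      Finset.sum_congr rfl fun p _ => by rw [hrel p]; ring
    rw [Finset.sum_sub_distrib, ← Finset.mul_sum] at e2
    have e3 := dxx_dx hM1 hh' hu
    have e4 := dxx_dx_mixed hM1 hh' hw hu
    have e5 : ∑ p ∈ Icc (1 : ℤ) (M : ℤ), Dx h w p * Dxx h u p
        = ∑ p ∈ Icc (1 : ℤ) (M : ℤ),
            (Dx h w p * w p + h ^ 2 / 12 * (Dxx h w p * Dx h w p)) :=
      Finset.sum_congr rfl fun p _ => by rw [hDxxu_eq p]; ring
    rw [Finset.sum_add_distrib, ← Finset.mul_sum] at e5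
    have e6 := dxx_dx hM1 hh' hw
    rw [e3, e4, e5, hDxww, e6] at e2
    rw [e1, e2]
    ring
  -- energy identity
  have hmain : (1 / τ) * (∑ p ∈ Icc (1 : ℤ) (M : ℤ), u p ^ 2)
      = (μ / τ + lam / 2) * (∑ p ∈ Icc (1 : ℤ) (M : ℤ), w p * u p) := by
    have key : ∑ p ∈ Icc (1 : ℤ) (M : ℤ), (1 / τ * u p ^ 2)
        = ∑ p ∈ Icc (1 : ℤ) (M : ℤ),
            ((μ / τ + lam / 2) * (w p * u p) - 1 / 2 * (Psi h a u p * u p)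
              + h ^ 2 / 4 * (Psi h b u p * u p) - 1 / 2 * (Dx h u p * u p)
              + h ^ 2 / 12 * (Dx h w p * u p)) :=
      Finset.sum_congr rfl fun p _ => by linear_combination u p * hscheme p
    simp only [Finset.sum_add_distrib, Finset.sum_sub_distrib, ← Finset.mul_sum] at key
    rw [hPa, hPb, hDxuu, hDxw_u] at key
    linarith [key]
  -- nonnegativity
  have hSu0 : 0 ≤ ∑ p ∈ Icc (1 : ℤ) (M : ℤ), u p ^ 2 :=
    Finset.sum_nonneg fun p _ => sq_nonneg _
  have hSw0 : 0 ≤ ∑ p ∈ Icc (1 : ℤ) (M : ℤ), w p ^ 2 :=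
    Finset.sum_nonneg fun p _ => sq_nonneg _
  have hDu0 : 0 ≤ ∑ p ∈ Icc (1 : ℤ) (M : ℤ), (u (p + 1) - u p) ^ 2 :=
    Finset.sum_nonneg fun p _ => sq_nonneg _
  have hDw0 : 0 ≤ ∑ p ∈ Icc (1 : ℤ) (M : ℤ), (w (p + 1) - w p) ^ 2 :=
    Finset.sum_nonneg fun p _ => sq_nonneg _
  -- Swu identity
  have k1 : ∑ p ∈ Icc (1 : ℤ) (M : ℤ), w p * u p
      = ∑ p ∈ Icc (1 : ℤ) (M : ℤ), Dxx h u p * u p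
        - h ^ 2 / 12 * ∑ p ∈ Icc (1 : ℤ) (M : ℤ), Dxx h w p * u p := by
    have : ∑ p ∈ Icc (1 : ℤ) (M : ℤ), w p * u p
        = ∑ p ∈ Icc (1 : ℤ) (M : ℤ),
            (Dxx h u p * u p - h ^ 2 / 12 * (Dxx h w p * u p)) :=
      Finset.sum_congr rfl fun p _ => by rw [hrel p]; ring
    rw [Finset.sum_sub_distrib, ← Finset.mul_sum] at this
    exact this
  have k2 := dxx_self hM1 hh' hu
  have k3 := sym hM1 hh' hw hu
  have k4 : ∑ p ∈ Icc (1 : ℤ) (M : ℤ), w p * Dxx h u p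
      = ∑ p ∈ Icc (1 : ℤ) (M : ℤ), w p ^ 2
        + h ^ 2 / 12 * ∑ p ∈ Icc (1 : ℤ) (M : ℤ), Dxx h w p * w p := by
    have : ∑ p ∈ Icc (1 : ℤ) (M : ℤ), w p * Dxx h u p
        = ∑ p ∈ Icc (1 : ℤ) (M : ℤ),
            (w p ^ 2 + h ^ 2 / 12 * (Dxx h w p * w p)) :=
      Finset.sum_congr rfl fun p _ => by rw [hDxxu_eq p]; ring
    rw [Finset.sum_add_distrib, ← Finset.mul_sum] at this
    exact this
  have k5 := dxx_self hM1 hh' hw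
  have k6 := sq_diff_le hM1 hw
  have hh2 : (0 : ℝ) < h ^ 2 := by positivity
  have hswu2 : h ^ 2 * ∑ p ∈ Icc (1 : ℤ) (M : ℤ), w p * u p
      = -(∑ p ∈ Icc (1 : ℤ) (M : ℤ), (u (p + 1) - u p) ^ 2)
        - h ^ 4 / 12 * ∑ p ∈ Icc (1 : ℤ) (M : ℤ), w p ^ 2
        + h ^ 4 / 144 * ∑ p ∈ Icc (1 : ℤ) (M : ℤ), (w (p + 1) - w p) ^ 2 := by
    exact alg_combine k1 k2 k3 k4 k5
  have hww : h ^ 4 / 144 * ∑ p ∈ Icc (1 : ℤ) (M : ℤ), (w (p + 1) - w p) ^ 2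
      ≤ h ^ 4 / 144 * (4 * ∑ p ∈ Icc (1 : ℤ) (M : ℤ), w p ^ 2) :=
    mul_le_mul_of_nonneg_left k6 (by positivity)
  have hSwu_le : h ^ 2 * ∑ p ∈ Icc (1 : ℤ) (M : ℤ), w p * u p
      ≤ -(∑ p ∈ Icc (1 : ℤ) (M : ℤ), (u (p + 1) - u p) ^ 2)
        - h ^ 4 / 18 * ∑ p ∈ Icc (1 : ℤ) (M : ℤ), w p ^ 2 := by
    nlinarith [hswu2, hww, hSw0]
  have hSwu_nonpos : ∑ p ∈ Icc (1 : ℤ) (M : ℤ), w p * u p ≤ 0 := by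
    have h4 : (0 : ℝ) ≤ h ^ 4 / 18 := by positivity
    have h0 : h ^ 2 * ∑ p ∈ Icc (1 : ℤ) (M : ℤ), w p * u p ≤ h ^ 2 * 0 := by
      nlinarith [mul_nonneg h4 hSw0]
    exact (mul_le_mul_iff_right₀ hh2).1 h0
  have hc : (0 : ℝ) < μ / τ + lam / 2 := by positivity
  have hτ' : (0 : ℝ) < 1 / τ := by positivity
  have hSu_zero : ∑ p ∈ Icc (1 : ℤ) (M : ℤ), u p ^ 2 = 0 := by
    have hle : (1 / τ) * ∑ p ∈ Icc (1 : ℤ) (M : ℤ), u p ^ 2 ≤ 0 := by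
      rw [hmain]
      exact mul_nonpos_of_nonneg_of_nonpos (le_of_lt hc) hSwu_nonpos
    nlinarith [mul_nonneg (le_of_lt hτ') hSu0]
  have hSwu_zero : ∑ p ∈ Icc (1 : ℤ) (M : ℤ), w p * u p = 0 := by
    rw [hSu_zero, mul_zero] at hmain
    exact (mul_eq_zero.1 hmain.symm).resolve_left (ne_of_gt hc)
  have hSw_zero : ∑ p ∈ Icc (1 : ℤ) (M : ℤ), w p ^ 2 = 0 := by
    rw [hSwu_zero, mul_zero] at hSwu_le
    have h4 : (0 : ℝ) < h ^ 4 / 18 := by positivity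
    nlinarith [mul_nonneg (le_of_lt h4) hSw0]
  have hu0 : ∀ p ∈ Icc (1 : ℤ) (M : ℤ), u p = 0 := by
    intro p hp
    have := (Finset.sum_eq_zero_iff_of_nonneg fun q _ => sq_nonneg (u q)).1 hSu_zero p hp
    exact pow_eq_zero_iff two_ne_zero |>.1 this
  have hw0 : ∀ p ∈ Icc (1 : ℤ) (M : ℤ), w p = 0 := by
    intro p hp
    have := (Finset.sum_eq_zero_iff_of_nonneg fun q _ => sq_nonneg (w q)).1 hSw_zero p hp
    exact pow_eq_zero_iff two_ne_zero |>.1 this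
  intro p
  exact ⟨per_ext hM1 hu hu0 p, per_ext hM1 hw hw0 p⟩
end

section
/- Let e, w, Q be periodic grid functions satisfying w_p = (δ_xx e)_p − (h²/12)(δ_xx w)_p + Q_p for all p ∈ ℤ. Then ‖w‖ ≤ (6/h²)·‖e‖ + (3/2)·‖Q‖. In particular, if e = 0 then ‖w‖ ≤ (3/2)·‖Q‖. -/
open Finset

/-! ### Auxiliary lemmas -/

lemma aux_sum_shift (M : ℕ) (hM : 1 ≤ M) (f : ℤ → ℝ) (hf : ∀ p : ℤ, f (p + (M : ℤ)) = f p) :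
    ∑ p ∈ Finset.Icc (1 : ℤ) (M : ℤ), f (p + 1) = ∑ p ∈ Finset.Icc (1 : ℤ) (M : ℤ), f p := by
  have hM' : (1 : ℤ) ≤ (M : ℤ) := by exact_mod_cast hM
  have h1 : ∑ p ∈ Finset.Icc (1 : ℤ) (M : ℤ), f (p + 1)
      = ∑ p ∈ Finset.Icc (2 : ℤ) ((M : ℤ) + 1), f p := by
    have hmap : Finset.Icc (2 : ℤ) ((M : ℤ) + 1)
        = Finset.map (addRightEmbedding 1) (Finset.Icc (1 : ℤ) (M : ℤ)) := by
      rw [Finset.map_add_right_Icc]; norm_num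
    rw [hmap, Finset.sum_map]
    rfl
  have h2 : Finset.Icc (2 : ℤ) ((M : ℤ) + 1) = insert ((M : ℤ) + 1) (Finset.Icc 2 (M : ℤ)) := by
    ext x; simp only [Finset.mem_Icc, Finset.mem_insert]; omega
  have h3 : Finset.Icc (1 : ℤ) (M : ℤ) = insert (1 : ℤ) (Finset.Icc 2 (M : ℤ)) := by
    ext x; simp only [Finset.mem_Icc, Finset.mem_insert]; omega
  have h4 : ((M : ℤ) + 1) ∉ Finset.Icc (2 : ℤ) (M : ℤ) := by simp
  have h5 : (1 : ℤ) ∉ Finset.Icc (2 : ℤ) (M : ℤ) := by simp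
  have h6 : f ((M : ℤ) + 1) = f 1 := by rw [add_comm]; exact hf 1
  rw [h1, h2, h3, Finset.sum_insert h4, Finset.sum_insert h5, h6]

lemma aux_sum_shift_neg (M : ℕ) (hM : 1 ≤ M) (f : ℤ → ℝ)
    (hf : ∀ p : ℤ, f (p + (M : ℤ)) = f p) :
    ∑ p ∈ Finset.Icc (1 : ℤ) (M : ℤ), f (p - 1) = ∑ p ∈ Finset.Icc (1 : ℤ) (M : ℤ), f p := by
  have := aux_sum_shift M hM (fun p => f (p - 1)) (fun p => by
    show f (p + (M : ℤ) - 1) = f (p - 1); rw [show p + (M : ℤ) - 1 = (p - 1) + (M : ℤ) by ring, hf])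
  simp only [add_sub_cancel_right] at this
  exact this.symm

/-- Embedding of grid functions into Euclidean space. -/
noncomputable def gridVec (M : ℕ) (h : ℝ) (v : ℤ → ℝ) : EuclideanSpace ℝ (Fin M) :=
  WithLp.toLp 2 (fun i => Real.sqrt h * v ((i : ℤ) + 1))

lemma aux_fin_sum (M : ℕ) (f : ℤ → ℝ) :
    ∑ i : Fin M, f ((i : ℤ) + 1) = ∑ p ∈ Finset.Icc (1 : ℤ) (M : ℤ), f p := by
  rw [Fin.sum_univ_eq_sum_range (fun i => f ((i : ℤ) + 1))]
  induction M with
  | zero => simp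
  | succ n ih =>
    rw [Finset.sum_range_succ, ih]
    have h3 : Finset.Icc (1 : ℤ) ((n : ℤ) + 1) = insert ((n : ℤ) + 1) (Finset.Icc 1 (n : ℤ)) := by
      ext x; simp only [Finset.mem_Icc, Finset.mem_insert]; omega
    push_cast
    rw [h3, Finset.sum_insert (by simp)]
    ring

lemma aux_ip_eq (M : ℕ) (h : ℝ) (hh : 0 < h) (v w : ℤ → ℝ) :
    ip M h v w = inner ℝ (gridVec M h v) (gridVec M h w) := by
  rw [PiLp.inner_apply]
  simp only [gridVec, PiLp.toLp_apply, RCLike.inner_apply, conj_trivial]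
  have : ∀ i : Fin M, Real.sqrt h * v ((i : ℤ) + 1) * (Real.sqrt h * w ((i : ℤ) + 1))
      = h * (v ((i : ℤ) + 1) * w ((i : ℤ) + 1)) := by
    intro i
    have hs : Real.sqrt h * Real.sqrt h = h := Real.mul_self_sqrt hh.le
    rw [mul_mul_mul_comm, hs]
  rw [Finset.sum_congr rfl (fun i _ => (mul_comm _ _).trans (this i)), ← Finset.mul_sum,
    aux_fin_sum M (fun p => v p * w p)]
  rfl

lemma aux_nrm_eq (M : ℕ) (h : ℝ) (hh : 0 < h) (v : ℤ → ℝ) :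
    nrm M h v = ‖gridVec M h v‖ := by
  rw [nrm, aux_ip_eq M h hh, real_inner_self_eq_norm_sq, Real.sqrt_sq (norm_nonneg _)]

lemma aux_norm_shift (M : ℕ) (hM : 1 ≤ M) (h : ℝ) (hh : 0 < h) (v : ℤ → ℝ)
    (hv : Periodic M v) :
    ‖gridVec M h (fun p => v (p + 1))‖ = ‖gridVec M h v‖ := by
  have := aux_ip_eq M h hh (fun p => v (p + 1)) (fun p => v (p + 1))
  have h2 := aux_ip_eq M h hh v v
  have hs : ip M h (fun p => v (p + 1)) (fun p => v (p + 1)) = ip M h v v := by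
    unfold ip
    congr 1
    exact aux_sum_shift M hM (fun p => v p * v p) (fun p => by
      show v (p + (M : ℤ)) * v (p + (M : ℤ)) = v p * v p; rw [hv])
  have h3 : (inner ℝ (gridVec M h (fun p => v (p + 1))) (gridVec M h (fun p => v (p + 1))) : ℝ)
      = inner ℝ (gridVec M h v) (gridVec M h v) := by rw [← this, ← h2, hs]
  rw [real_inner_self_eq_norm_sq, real_inner_self_eq_norm_sq] at h3
  nlinarith [norm_nonneg (gridVec M h (fun p => v (p + 1))), norm_nonneg (gridVec M h v)]

lemma aux_norm_shift' (M : ℕ) (hM : 1 ≤ M) (h : ℝ) (hh : 0 < h) (v : ℤ → ℝ)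
    (hv : Periodic M v) :
    ‖gridVec M h (fun p => v (p - 1))‖ = ‖gridVec M h v‖ := by
  have h2 := aux_ip_eq M h hh v v
  have h1 := aux_ip_eq M h hh (fun p => v (p - 1)) (fun p => v (p - 1))
  have hs : ip M h (fun p => v (p - 1)) (fun p => v (p - 1)) = ip M h v v := by
    unfold ip
    congr 1
    exact aux_sum_shift_neg M hM (fun p => v p * v p) (fun p => by
      show v (p + (M : ℤ)) * v (p + (M : ℤ)) = v p * v p; rw [hv])
  have h3 : (inner ℝ (gridVec M h (fun p => v (p - 1))) (gridVec M h (fun p => v (p - 1))) : ℝ)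
      = inner ℝ (gridVec M h v) (gridVec M h v) := by rw [← h1, ← h2, hs]
  rw [real_inner_self_eq_norm_sq, real_inner_self_eq_norm_sq] at h3
  nlinarith [norm_nonneg (gridVec M h (fun p => v (p - 1))), norm_nonneg (gridVec M h v)]

lemma aux_Dxx_bound (M : ℕ) (hM : 1 ≤ M) (h : ℝ) (hh : 0 < h) (v : ℤ → ℝ)
    (hv : Periodic M v) :
    ‖gridVec M h (Dxx h v)‖ ≤ 4 / h ^ 2 * ‖gridVec M h v‖ := by
  have key : gridVec M h (Dxx h v)
      = (h ^ 2)⁻¹ • (gridVec M h (fun p => v (p + 1)) + gridVec M h (fun p => v (p - 1))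
          - (2 : ℝ) • gridVec M h v) := by
    ext i
    simp only [gridVec, PiLp.toLp_apply, Dxx, PiLp.smul_apply, PiLp.add_apply, PiLp.sub_apply, smul_eq_mul]
    field_simp
    ring
  rw [key, norm_smul]
  have h2 : ‖gridVec M h (fun p => v (p + 1)) + gridVec M h (fun p => v (p - 1))
      - (2 : ℝ) • gridVec M h v‖ ≤ 4 * ‖gridVec M h v‖ := by
    calc ‖gridVec M h (fun p => v (p + 1)) + gridVec M h (fun p => v (p - 1))
          - (2 : ℝ) • gridVec M h v‖
        ≤ ‖gridVec M h (fun p => v (p + 1)) + gridVec M h (fun p => v (p - 1))‖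
            + ‖(2 : ℝ) • gridVec M h v‖ := norm_sub_le _ _
      _ ≤ ‖gridVec M h (fun p => v (p + 1))‖ + ‖gridVec M h (fun p => v (p - 1))‖
            + ‖(2 : ℝ) • gridVec M h v‖ := by
          gcongr; exact norm_add_le _ _
      _ = 4 * ‖gridVec M h v‖ := by
          rw [aux_norm_shift M hM h hh v hv, aux_norm_shift' M hM h hh v hv, norm_smul,
            Real.norm_ofNat]
          ring
  have hpos : (0 : ℝ) < h ^ 2 := by positivity
  calc ‖(h ^ 2)⁻¹‖ * ‖gridVec M h (fun p => v (p + 1)) + gridVec M h (fun p => v (p - 1))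
        - (2 : ℝ) • gridVec M h v‖
      ≤ (h ^ 2)⁻¹ * (4 * ‖gridVec M h v‖) := by
        rw [norm_inv, Real.norm_of_nonneg hpos.le]
        exact mul_le_mul_of_nonneg_left h2 (by positivity)
    _ = 4 / h ^ 2 * ‖gridVec M h v‖ := by
        rw [div_eq_inv_mul, mul_assoc]

set_option maxHeartbeats 1000000 in
/-- if `w = δ_xx e − (h²/12) δ_xx w + Q`, then
`‖w‖ ≤ (6/h²)·‖e‖ + (3/2)·‖Q‖`. -/
theorem stmt_19 (M : ℕ) (hM : 3 ≤ M) (h : ℝ) (hh : 0 < h) (L : ℝ) (hL : L = M * h)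
    (e w Q : ℤ → ℝ) (he : Periodic M e) (hw : Periodic M w) (hQ : Periodic M Q)
    (hrel : ∀ p : ℤ, w p = Dxx h e p - h ^ 2 / 12 * Dxx h w p + Q p) :
    nrm M h w ≤ 6 / h ^ 2 * nrm M h e + 3 / 2 * nrm M h Q := by
  have hM1 : 1 ≤ M := by omega
  set x := gridVec M h w with hx
  set a := gridVec M h (Dxx h e) with ha
  set b := gridVec M h (Dxx h w) with hb
  set q := gridVec M h Q with hq
  have hdecomp : x = a - (h ^ 2 / 12) • b + q := by
    ext i
    simp only [hx, ha, hb, hq, gridVec, PiLp.toLp_apply, PiLp.add_apply, PiLp.sub_apply, PiLp.smul_apply,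
      smul_eq_mul]
    rw [hrel ((i : ℤ) + 1)]
    ring
  have hinner : (inner ℝ x x : ℝ) = inner ℝ a x - (h ^ 2 / 12) * inner ℝ b x + inner ℝ q x := by
    nth_rewrite 1 [hdecomp]
    rw [inner_add_left, inner_sub_left, real_inner_smul_left]
  have hax : (inner ℝ a x : ℝ) ≤ ‖a‖ * ‖x‖ := real_inner_le_norm a x
  have hqx : (inner ℝ q x : ℝ) ≤ ‖q‖ * ‖x‖ := real_inner_le_norm q x
  have hbx : |(inner ℝ b x : ℝ)| ≤ ‖b‖ * ‖x‖ := abs_real_inner_le_norm b x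
  have hxx : (inner ℝ x x : ℝ) = ‖x‖ ^ 2 := real_inner_self_eq_norm_sq x
  have hE : ‖a‖ ≤ 4 / h ^ 2 * ‖gridVec M h e‖ := aux_Dxx_bound M hM1 h hh e he
  have hB : ‖b‖ ≤ 4 / h ^ 2 * ‖x‖ := aux_Dxx_bound M hM1 h hh w hw
  have hh2 : (0 : ℝ) < h ^ 2 := by positivity
  have hxn : (0 : ℝ) ≤ ‖x‖ := norm_nonneg x
  have hen : (0 : ℝ) ≤ ‖gridVec M h e‖ := norm_nonneg _
  have hqn : (0 : ℝ) ≤ ‖q‖ := norm_nonneg q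
  -- key quadratic inequality
  have hkey : ‖x‖ ^ 2 ≤ 4 / h ^ 2 * ‖gridVec M h e‖ * ‖x‖ + (1 / 3) * ‖x‖ ^ 2 + ‖q‖ * ‖x‖ := by
    have h1 : (h ^ 2 / 12) * (inner ℝ b x : ℝ) ≥ -((h ^ 2 / 12) * (‖b‖ * ‖x‖)) := by
      have := abs_le.mp hbx
      nlinarith [this.1]
    have h2 : (h ^ 2 / 12) * (‖b‖ * ‖x‖) ≤ (h ^ 2 / 12) * (4 / h ^ 2 * ‖x‖ * ‖x‖) := by
      have : ‖b‖ * ‖x‖ ≤ 4 / h ^ 2 * ‖x‖ * ‖x‖ := by nlinarith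
      nlinarith
    have h3 : (h ^ 2 / 12) * (4 / h ^ 2 * ‖x‖ * ‖x‖) = (1 / 3) * ‖x‖ ^ 2 := by
      field_simp; ring
    nlinarith [hinner, hax, hqx, hxx, hE]
  have hfin : ‖x‖ ≤ 6 / h ^ 2 * ‖gridVec M h e‖ + 3 / 2 * ‖q‖ := by
    have h32 : 6 / h ^ 2 * ‖gridVec M h e‖ = 3 / 2 * (4 / h ^ 2 * ‖gridVec M h e‖) := by ring
    rcases eq_or_lt_of_le hxn with h0 | h0
    · rw [← h0]; positivity
    · rw [h32]
      nlinarith [hkey, mul_pos h0 h0]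
  rw [aux_nrm_eq M h hh w, aux_nrm_eq M h hh e, aux_nrm_eq M h hh Q]
  exact hfin
end
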